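/- arXiv:1107.1131 — 5 statements merged into one kernel-verified Lean document; each statement's English description precedes it below -/
import Mathlib

section
/- In any geometric graph containing a path with consecutive vertices v1, v2, v3, v4, v5 (in the plane, points in general position, edges drawn as straight segments), if segment v1v2 crosses segment v3v4 and segment v2v3 crosses segment v4v5, then segment v1v2 also crosses segment v4v5. -/
noncomputable section

/-- A point of the plane. -/
abbrev Pt : Type := ℝ × ℝ

/-- Two straight segments cross: they meet at a point interior to both. -/
def SegCross (p q r s : Pt) : Prop :=
  (openSegment ℝ p q ∩ openSegment ℝ r s).Nonempty

/-- Points in general position: distinct, and no three collinear. -/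
def GenPos {V : Type*} (pos : V → Pt) : Prop :=
  Function.Injective pos ∧
    ∀ a b c : V, a ≠ b → b ≠ c → a ≠ c →
      ¬ Collinear ℝ ({pos a, pos b, pos c} : Set Pt)

/-! Write `[abc]` for twice the signed area of the triangle `abc`. In general position, segments
`ab` and `cd` cross exactly when `[abc][abd] < 0` and `[cda][cdb] < 0`. After a reflection we may
assume `[012] > 0`; the two crossings and the identity `[abc] - [abd] = [cdb] - [cda]` then fix the
signs of `[013], [230], [231], [124], [341], [342]`, and the Grassmann–Plücker relations
`[014][123] = [013][124] - [012][341]` and `[340][123] = [230][341] - [013][342]` force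
`[014] > 0` and `[340] > 0`, which are the two separations making `01` cross `34`. -/

/-- Twice the signed area of the triangle `p q r`: positive iff `p q r` turns counterclockwise. -/
def orient (p q r : Pt) : ℝ :=
  (q.1 - p.1) * (r.2 - p.2) - (q.2 - p.2) * (r.1 - p.1)

def Separates (p q r s : Pt) : Prop :=
  orient p q r * orient p q s < 0

lemma orient_add_smul_add_smul (p q r s : Pt) {c d : ℝ} (hcd : c + d = 1) :
    orient p q (c • r + d • s) = c * orient p q r + d * orient p q s := by
  simp only [orient, Prod.fst_add, Prod.snd_add, Prod.smul_fst, Prod.smul_snd, smul_eq_mul]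
  linear_combination ((q.1 - p.1) * p.2 - (q.2 - p.2) * p.1) * hcd

lemma orient_eq_zero_of_mem_openSegment {p q z : Pt} (hz : z ∈ openSegment ℝ p q) :
    orient p q z = 0 := by
  obtain ⟨a, b, -, -, hab, rfl⟩ := hz
  rw [orient_add_smul_add_smul p q p q hab]
  simp only [orient]
  ring

lemma collinear_of_orient_eq_zero {p q r : Pt} (h : orient p q r = 0) :
    Collinear ℝ ({p, q, r} : Set Pt) := by
  rcases eq_or_ne q p with rfl | hqp
  · rw [Set.insert_idem]
    exact collinear_pair ℝ q r
  rw [collinear_iff_of_mem (Set.mem_insert p _)]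
  refine ⟨q - p, ?_⟩
  simp only [Set.mem_insert_iff, Set.mem_singleton_iff, forall_eq_or_imp, forall_eq]
  refine ⟨⟨0, by simp⟩, ⟨1, by simp⟩, ?_⟩
  simp only [orient] at h
  have hqp' : q.1 - p.1 ≠ 0 ∨ q.2 - p.2 ≠ 0 := by
    by_contra! h0
    exact hqp (Prod.ext (sub_eq_zero.1 h0.1) (sub_eq_zero.1 h0.2))
  rcases hqp' with h1 | h2
  · refine ⟨(r.1 - p.1) / (q.1 - p.1), Prod.ext ?_ ?_⟩ <;>
      simp only [vadd_eq_add, Prod.fst_add, Prod.snd_add, Prod.smul_fst, Prod.smul_snd,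
        Prod.fst_sub, Prod.snd_sub, smul_eq_mul] <;>
      field_simp
    · ring
    · linear_combination h
  · refine ⟨(r.2 - p.2) / (q.2 - p.2), Prod.ext ?_ ?_⟩ <;>
      simp only [vadd_eq_add, Prod.fst_add, Prod.snd_add, Prod.smul_fst, Prod.smul_snd,
        Prod.fst_sub, Prod.snd_sub, smul_eq_mul] <;>
      field_simp
    · linear_combination -h
    · ring

lemma SegCross.symm {p q r s : Pt} (h : SegCross p q r s) : SegCross r s p q := by
  rwa [SegCross, Set.inter_comm]

lemma SegCross.separates {p q r s : Pt} (h : SegCross p q r s) (hr : orient p q r ≠ 0) :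
    Separates p q r s := by
  obtain ⟨z, hzpq, c, d, hc, hd, hcd, rfl⟩ := h
  have hbal : c * orient p q r + d * orient p q s = 0 := by
    rw [← orient_add_smul_add_smul p q r s hcd, orient_eq_zero_of_mem_openSegment hzpq]
  have hprod : d * (orient p q r * orient p q s) = -(c * orient p q r ^ 2) := by
    linear_combination orient p q r * hbal
  refine neg_of_mul_neg_right ?_ hd.le
  rw [hprod, neg_neg_iff_pos]
  exact mul_pos hc (sq_pos_of_ne_zero hr)

lemma segCross_of_separates {p q r s : Pt} (h₁ : Separates p q r s) (h₂ : Separates r s p q) :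
    SegCross p q r s := by
  have hsum : orient r s q - orient r s p = orient p q r - orient p q s := by
    simp only [orient]; ring
  have hpt : orient r s q • p + (-orient r s p) • q = (-orient p q s) • r + orient p q r • s := by
    ext <;> simp only [orient, Prod.fst_add, Prod.snd_add, Prod.smul_fst, Prod.smul_snd,
      smul_eq_mul] <;> ring
  unfold Separates at h₁ h₂
  generalize orient p q r = A, orient p q s = B, orient r s p = C, orient r s q = E at *
  have hdiv : ∀ x, 0 < x * (A - B) → 0 < x / (A - B) := fun x hx => div_pos_iff.2 (mul_pos_iff.1 hx)
  have hA : 0 < A * (A - B) := by nlinarith [sq_nonneg A]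
  have hB : 0 < -B * (A - B) := by nlinarith [sq_nonneg B]
  have hE : 0 < E * (A - B) := by rw [← hsum]; nlinarith [sq_nonneg E]
  have hC : 0 < -C * (A - B) := by rw [← hsum]; nlinarith [sq_nonneg C]
  have hD : A - B ≠ 0 := right_ne_zero_of_mul hA.ne'
  -- The lines meet at `(E p - C q) / (E - C) = (A s - B r) / (A - B)`.
  refine ⟨(E / (A - B)) • p + (-C / (A - B)) • q, ⟨_, _, hdiv E hE, hdiv (-C) hC, ?_, rfl⟩,
    ⟨_, _, hdiv (-B) hB, hdiv A hA, ?_, ?_⟩⟩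
  · rw [← add_div, ← sub_eq_add_neg, hsum, div_self hD]
  · rw [← add_div, neg_add_eq_sub, div_self hD]
  · simp only [div_eq_inv_mul, mul_smul, ← smul_add, hpt]

lemma Separates.first_last_of_path {p₀ p₁ p₂ p₃ p₄ : Pt} (h₀₁ : Separates p₀ p₁ p₂ p₃)
    (h₂₃ : Separates p₂ p₃ p₀ p₁) (h₁₂ : Separates p₁ p₂ p₃ p₄) (h₃₄ : Separates p₃ p₄ p₁ p₂) :
    Separates p₀ p₁ p₃ p₄ ∧ Separates p₃ p₄ p₀ p₁ := by
  wlog hpos : 0 < orient p₀ p₁ p₂ generalizing p₀ p₁ p₂ p₃ p₄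
  · let σ : Pt → Pt := fun p => (p.1, -p.2)
    have hσ : ∀ a b c, orient (σ a) (σ b) (σ c) = -orient a b c := fun a b c => by
      simp only [orient, σ]; ring
    have hsep : ∀ a b c d, Separates (σ a) (σ b) (σ c) (σ d) ↔ Separates a b c d := by
      simp only [Separates, hσ, neg_mul_neg, implies_true]
    have hneg : 0 < orient (σ p₀) (σ p₁) (σ p₂) := by
      rw [hσ, neg_pos]
      exact lt_of_le_of_ne (not_lt.1 hpos) (left_ne_zero_of_mul h₀₁.ne)
    simpa only [hsep] using
      this ((hsep ..).2 h₀₁) ((hsep ..).2 h₂₃) ((hsep ..).2 h₁₂) ((hsep ..).2 h₃₄) hneg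
  unfold Separates at *
  have quad₁ : orient p₀ p₁ p₂ - orient p₀ p₁ p₃ = orient p₂ p₃ p₁ - orient p₂ p₃ p₀ := by
    simp only [orient]; ring
  have quad₂ : orient p₁ p₂ p₃ - orient p₁ p₂ p₄ = orient p₃ p₄ p₂ - orient p₃ p₄ p₁ := by
    simp only [orient]; ring
  have cyc : orient p₁ p₂ p₃ = orient p₂ p₃ p₁ := by simp only [orient]; ring
  have plücker₁ : orient p₀ p₁ p₄ * orient p₁ p₂ p₃ =
      orient p₀ p₁ p₃ * orient p₁ p₂ p₄ - orient p₀ p₁ p₂ * orient p₃ p₄ p₁ := by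
    simp only [orient]; ring
  have plücker₂ : orient p₃ p₄ p₀ * orient p₁ p₂ p₃ =
      orient p₂ p₃ p₀ * orient p₃ p₄ p₁ - orient p₀ p₁ p₃ * orient p₃ p₄ p₂ := by
    simp only [orient]; ring
  have h013 : orient p₀ p₁ p₃ < 0 := neg_of_mul_neg_right h₀₁ hpos.le
  have ⟨h230, h231⟩ : orient p₂ p₃ p₀ < 0 ∧ 0 < orient p₂ p₃ p₁ :=
    (mul_neg_iff.1 h₂₃).resolve_left fun h => by linarith [h.1, h.2]
  have h124 : orient p₁ p₂ p₄ < 0 := neg_of_mul_neg_right h₁₂ (cyc ▸ h231.le)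
  have ⟨h341, h342⟩ : orient p₃ p₄ p₁ < 0 ∧ 0 < orient p₃ p₄ p₂ :=
    (mul_neg_iff.1 h₃₄).resolve_left fun h => by linarith [h.1, h.2, cyc ▸ h231]
  have h014 : 0 < orient p₀ p₁ p₄ := by
    refine (pos_iff_pos_of_mul_pos (b := orient p₁ p₂ p₃) ?_).2 (cyc ▸ h231)
    rw [plücker₁]
    linarith [mul_pos_of_neg_of_neg h013 h124, mul_neg_of_pos_of_neg hpos h341]
  have h340 : 0 < orient p₃ p₄ p₀ := by
    refine (pos_iff_pos_of_mul_pos (b := orient p₁ p₂ p₃) ?_).2 (cyc ▸ h231)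
    rw [plücker₂]
    linarith [mul_pos_of_neg_of_neg h230 h341, mul_neg_of_neg_of_pos h013 h342]
  exact ⟨mul_neg_of_neg_of_pos h013 h014, mul_neg_of_pos_of_neg h340 h341⟩

/-- If in a geometric path on vertices `v 0, …, v 4` the edge `e₁ = v0v1` crosses
`e₃ = v2v3` and `e₂ = v1v2` crosses `e₄ = v3v4`, then `e₁` crosses `e₄`. -/
theorem p5_crossing_rule (v : Fin 5 → Pt) (hgen : GenPos v)
    (h13 : SegCross (v 0) (v 1) (v 2) (v 3))
    (h24 : SegCross (v 1) (v 2) (v 3) (v 4)) :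
    SegCross (v 0) (v 1) (v 3) (v 4) := by
  have hne : ∀ i j k : Fin 5, i ≠ j ∧ j ≠ k ∧ i ≠ k → orient (v i) (v j) (v k) ≠ 0 :=
    fun i j k ⟨hij, hjk, hik⟩ h => hgen.2 i j k hij hjk hik (collinear_of_orient_eq_zero h)
  obtain ⟨h₀₁, h₃₄⟩ := Separates.first_last_of_path
    (h13.separates (hne 0 1 2 (by decide))) (h13.symm.separates (hne 2 3 0 (by decide)))
    (h24.separates (hne 1 2 3 (by decide))) (h24.symm.separates (hne 3 4 1 (by decide)))
  exact segCross_of_separates h₀₁ h₃₄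
end
end

section
/- Let v1,...,v6 be points in general position in the plane forming a 6-cycle with straight-line edges e_i = segment v_i v_{i+1} (indices mod 6). If e_1 crosses each of e_3, e_4, and e_5, then e_2 does not cross e_6. -/
noncomputable section

/-!
The line through `v₀` and `v₁` carries `e₁`. An edge crossing `e₁` has its endpoints strictly on
opposite sides of that line, so the crossings with `e₃, e₄, e₅` force `v₂, v₃, v₄, v₅` to alternate
sides, and `v₂`, `v₅` lie on opposite sides. But `e₂` minus `v₁` lies on the side of `v₂` and `e₆`
minus `v₀` on the side of `v₅`, so these two edges cannot meet in their interiors.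
-/

section Sign

variable {𝕜 : Type*} [CommRing 𝕜] [LinearOrder 𝕜] [IsStrictOrderedRing 𝕜]

theorem mul_neg_of_zero_mem_openSegment {a b : 𝕜} (h : (0 : 𝕜) ∈ openSegment 𝕜 a b)
    (ha : a ≠ 0) : a * b < 0 := by
  obtain ⟨s, t, hs, ht, -, hst⟩ := h
  have hsa : 0 < s * a ^ 2 := mul_pos hs (sq_pos_of_ne_zero ha)
  have hsb : s * a ^ 2 = -(t * (a * b)) := by linear_combination a * hst
  nlinarith

theorem mul_pos_of_mem_openSegment_zero_left {x b : 𝕜} (h : x ∈ openSegment 𝕜 0 b)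
    (hb : b ≠ 0) : 0 < x * b := by
  obtain ⟨s, t, -, ht, -, rfl⟩ := h
  have : 0 < t * b ^ 2 := mul_pos ht (sq_pos_of_ne_zero hb)
  simpa [smul_eq_mul, sq, mul_assoc] using this

theorem mul_pos_of_mul_neg_of_mul_neg {a b c : 𝕜} (hab : a * b < 0) (hbc : b * c < 0) :
    0 < a * c := by
  nlinarith [mul_pos_of_neg_of_neg hab hbc, sq_nonneg b]

theorem mul_pos_of_mul_pos_of_mul_pos {x a b : 𝕜} (ha : 0 < x * a) (hb : 0 < x * b) :
    0 < a * b := by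
  nlinarith [mul_pos ha hb, sq_nonneg x]

theorem AffineMap.apply_mem_openSegment {E : Type*} [AddCommGroup E] [Module 𝕜 E]
    (f : E →ᵃ[𝕜] 𝕜) {a b x : E} (hx : x ∈ openSegment 𝕜 a b) :
    f x ∈ openSegment 𝕜 (f a) (f b) :=
  image_openSegment 𝕜 f a b ▸ Set.mem_image_of_mem f hx

end Sign

/-- Its sign tells on which side of the line `ab` the point `p` lies. -/
def lineSide (a b : Pt) : Pt →ᵃ[ℝ] ℝ where
  toFun p := (b.1 - a.1) * (p.2 - a.2) - (b.2 - a.2) * (p.1 - a.1)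
  linear := (b.1 - a.1) • LinearMap.snd ℝ ℝ ℝ - (b.2 - a.2) • LinearMap.fst ℝ ℝ ℝ
  map_vadd' p w := by
    simp only [vadd_eq_add, Prod.fst_add, Prod.snd_add, LinearMap.sub_apply,
      LinearMap.smul_apply, LinearMap.snd_apply, LinearMap.fst_apply, smul_eq_mul]
    ring

theorem lineSide_apply (a b p : Pt) :
    lineSide a b p = (b.1 - a.1) * (p.2 - a.2) - (b.2 - a.2) * (p.1 - a.1) := rfl

@[simp]
theorem lineSide_left (a b : Pt) : lineSide a b a = 0 := by
  simp [lineSide_apply]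

@[simp]
theorem lineSide_right (a b : Pt) : lineSide a b b = 0 := by
  rw [lineSide_apply]; ring

theorem collinear_of_lineSide_eq_zero {a b p : Pt} (h : lineSide a b p = 0) :
    Collinear ℝ ({p, a, b} : Set Pt) := by
  rcases eq_or_ne a b with rfl | hab
  · simpa using collinear_pair ℝ p a
  apply collinear_insert_of_mem_affineSpan_pair
  have hd : (b.1 - a.1) ^ 2 + (b.2 - a.2) ^ 2 ≠ 0 := by
    intro hd
    apply hab
    ext <;> nlinarith [sq_nonneg (b.1 - a.1), sq_nonneg (b.2 - a.2)]
  -- `p` is the point of the line `ab` with parameter `⟪p - a, b - a⟫ / ‖b - a‖²`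
  convert AffineMap.lineMap_mem_affineSpan_pair
    (((b.1 - a.1) * (p.1 - a.1) + (b.2 - a.2) * (p.2 - a.2)) /
      ((b.1 - a.1) ^ 2 + (b.2 - a.2) ^ 2)) a b
  rw [lineSide_apply] at h
  ext <;> simp only [AffineMap.lineMap_apply_module', Prod.fst_add, Prod.snd_add,
    Prod.smul_fst, Prod.smul_snd, Prod.fst_sub, Prod.snd_sub, smul_eq_mul] <;> field_simp
  · linear_combination (a.2 - b.2) * h
  · linear_combination (b.1 - a.1) * h

theorem lineSide_mul_neg_of_segCross {a b p q : Pt} (h : SegCross a b p q)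
    (hp : lineSide a b p ≠ 0) : lineSide a b p * lineSide a b q < 0 := by
  obtain ⟨x, hab, hpq⟩ := h
  have hx : lineSide a b x = 0 := by
    simpa using (lineSide a b).apply_mem_openSegment hab
  exact mul_neg_of_zero_mem_openSegment (hx ▸ (lineSide a b).apply_mem_openSegment hpq) hp

/-- For a geometric 6-cycle with edges `e₁ = v0v1, …, e₅ = v4v5, e₆ = v5v0`:
if `e₁` crosses each of `e₃`, `e₄`, `e₅`, then `e₂` does not cross `e₆`. -/
theorem c6_crossing_rule (v : Fin 6 → Pt) (hgen : GenPos v)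
    (h13 : SegCross (v 0) (v 1) (v 2) (v 3))
    (h14 : SegCross (v 0) (v 1) (v 3) (v 4))
    (h15 : SegCross (v 0) (v 1) (v 4) (v 5)) :
    ¬ SegCross (v 1) (v 2) (v 5) (v 0) := by
  set f := lineSide (v 0) (v 1)
  have off_line : ∀ i : Fin 6, i ≠ 0 → i ≠ 1 → f (v i) ≠ 0 := fun i h0 h1 hi =>
    hgen.2 i 0 1 h0 (by decide) h1 (collinear_of_lineSide_eq_zero hi)
  have h23 := lineSide_mul_neg_of_segCross h13 (off_line 2 (by decide) (by decide))
  have h34 := lineSide_mul_neg_of_segCross h14 (off_line 3 (by decide) (by decide))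
  have h45 := lineSide_mul_neg_of_segCross h15 (off_line 4 (by decide) (by decide))
  have h24 := mul_pos_of_mul_neg_of_mul_neg h23 h34
  rintro ⟨x, hx12, hx50⟩
  have hx2 : 0 < f x * f (v 2) := by
    refine mul_pos_of_mem_openSegment_zero_left ?_ (off_line 2 (by decide) (by decide))
    simpa [f] using f.apply_mem_openSegment hx12
  have hx5 : 0 < f x * f (v 5) := by
    refine mul_pos_of_mem_openSegment_zero_left ?_ (off_line 5 (by decide) (by decide))
    simpa [f, openSegment_symm] using f.apply_mem_openSegment hx50
  have h25 := mul_pos_of_mul_pos_of_mul_pos hx2 hx5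
  exact h45.not_gt (mul_pos_of_mul_pos_of_mul_pos h24 h25)
end
end

section
/- Let v1,...,vn (n ≥ 4 even) be points in general position in the plane forming an n-cycle with straight-line edges e_i = segment v_i v_{i+1} (indices mod n). If edge e_1 crosses every edge e_3, e_4, ..., e_{n-1}, then e_2 does not cross e_n. -/
noncomputable section

/-- Signed side of `P` w.r.t. the directed line `A → B`. -/
def det2 (A B P : Pt) : ℝ := (B.1 - A.1) * (P.2 - A.2) - (B.2 - A.2) * (P.1 - A.1)

lemma det2_self_left (A B : Pt) : det2 A B A = 0 := by simp [det2]

lemma det2_self_right (A B : Pt) : det2 A B B = 0 := by simp [det2]; ring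

lemma det2_combo (A B p q : Pt) (a b : ℝ) (hab : a + b = 1) :
    det2 A B (a • p + b • q) = a * det2 A B p + b * det2 A B q := by
  have hb : b = 1 - a := by linarith
  subst hb
  simp only [det2, Prod.fst_add, Prod.snd_add, Prod.smul_fst, Prod.smul_snd, smul_eq_mul]
  ring

lemma collinear_of_det2 (A B P : Pt) (hAB : A ≠ B)
    (h : det2 A B P = 0) : Collinear ℝ ({A, B, P} : Set Pt) := by
  rw [collinear_iff_of_mem (Set.mem_insert A _)]
  refine ⟨B - A, ?_⟩
  have hab2 : (B.1 - A.1) ^ 2 + (B.2 - A.2) ^ 2 ≠ 0 := by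
    intro hz
    apply hAB
    have h1 : B.1 - A.1 = 0 := by nlinarith [sq_nonneg (B.1 - A.1), sq_nonneg (B.2 - A.2)]
    have h2 : B.2 - A.2 = 0 := by nlinarith [sq_nonneg (B.1 - A.1), sq_nonneg (B.2 - A.2)]
    exact Prod.ext (by linarith) (by linarith)
  intro p hp
  simp only [Set.mem_insert_iff, Set.mem_singleton_iff] at hp
  rcases hp with rfl | rfl | rfl
  · exact ⟨0, by simp⟩
  · exact ⟨1, by simp [vadd_eq_add]⟩
  · simp only [det2] at h
    set t : ℝ := ((B.1 - A.1) * (p.1 - A.1) + (B.2 - A.2) * (p.2 - A.2)) /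
      ((B.1 - A.1) ^ 2 + (B.2 - A.2) ^ 2) with ht
    refine ⟨t, ?_⟩
    have h1 : t * (B.1 - A.1) = p.1 - A.1 := by
      rw [ht, div_mul_eq_mul_div, div_eq_iff hab2]
      linear_combination (B.2 - A.2) * h
    have h2 : t * (B.2 - A.2) = p.2 - A.2 := by
      rw [ht, div_mul_eq_mul_div, div_eq_iff hab2]
      linear_combination (-(B.1 - A.1)) * h
    have key : (t • (B - A) +ᵥ A) = ((t * (B.1 - A.1) + A.1, t * (B.2 - A.2) + A.2) : Pt) := by
      simp [vadd_eq_add, Prod.ext_iff, Prod.smul_fst, Prod.smul_snd, smul_eq_mul]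
    rw [key]
    exact Prod.ext (by dsimp; linarith) (by dsimp; linarith)

lemma opp_sides (A B r s : Pt) (hr : det2 A B r ≠ 0) (hs : det2 A B s ≠ 0)
    (h : SegCross A B r s) : det2 A B r * det2 A B s < 0 := by
  obtain ⟨x, hx1, hx2⟩ := h
  obtain ⟨a, b, ha, hb, hab, rfl⟩ := hx1
  obtain ⟨c, d, hc, hd, hcd, heq⟩ := hx2
  have h0 : det2 A B (a • A + b • B) = 0 := by
    rw [det2_combo A B A B a b hab, det2_self_left, det2_self_right]; ring
  have h1 : det2 A B (c • r + d • s) = c * det2 A B r + d * det2 A B s :=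
    det2_combo A B r s c d hcd
  rw [heq, h0] at h1
  rcases hr.lt_or_gt with h' | h' <;> rcases hs.lt_or_gt with h'' | h''
  · nlinarith [mul_pos hc (neg_pos.mpr h'), mul_pos hd (neg_pos.mpr h'')]
  · exact mul_neg_of_neg_of_pos h' h''
  · exact mul_neg_of_pos_of_neg h' h''
  · nlinarith [mul_pos hc h', mul_pos hd h'']

/-- For a geometric `n`-cycle (`n ≥ 4` even) with vertices `v i`, `i : ZMod n`, and
edges `eᵢ = segment (v i) (v (i+1))`: if `e₁` crosses every edge `e₃, …, e_{n-1}`,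
then `e₂` does not cross `eₙ`. -/
theorem cn_even_crossing_rule (n : ℕ) (hn : 4 ≤ n) (hev : Even n)
    (v : ZMod n → Pt) (hgen : GenPos v)
    (hcross : ∀ k : ℕ, 3 ≤ k → k ≤ n - 1 →
      SegCross (v 1) (v 2) (v (k : ZMod n)) (v ((k : ZMod n) + 1))) :
    ¬ SegCross (v 2) (v 3) (v (n : ZMod n)) (v ((n : ZMod n) + 1)) := by
  haveI : NeZero n := ⟨by omega⟩
  obtain ⟨hinj, hcol⟩ := hgen
  -- distinct small casts in `ZMod n`
  have hne' : ∀ a b : ℕ, a % n ≠ b % n → ((a : ZMod n) ≠ (b : ZMod n)) := by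
    intro a b h e
    apply h
    simpa [ZMod.val_natCast] using congrArg ZMod.val e
  have h12 : (1 : ZMod n) ≠ 2 := by
    have := hne' 1 2 (by rw [Nat.mod_eq_of_lt (by omega), Nat.mod_eq_of_lt (by omega)]; omega)
    simpa using this
  have hAB : v 1 ≠ v 2 := fun e => h12 (hinj e)
  -- nonvanishing of the side functional away from 1, 2
  have hnzc : ∀ c : ZMod n, c ≠ 1 → c ≠ 2 → det2 (v 1) (v 2) (v c) ≠ 0 := by
    intro c h1 h2 h0
    exact hcol 1 2 c h12 (fun e => h2 e.symm) (fun e => h1 e.symm)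
      (collinear_of_det2 _ _ _ hAB h0)
  set g : ℕ → ℝ := fun k => det2 (v 1) (v 2) (v (k : ZMod n)) with hg
  have hgnz : ∀ k : ℕ, k ≤ n → 3 ≤ k → g k ≠ 0 := by
    intro k hk hk3
    apply hnzc
    · have := hne' k 1 ?_
      · simpa using this
      · rcases Nat.lt_or_ge k n with h | h
        · rw [Nat.mod_eq_of_lt h, Nat.mod_eq_of_lt (by omega)]; omega
        · have : k = n := by omega
          rw [this, Nat.mod_self, Nat.mod_eq_of_lt (by omega)]; omega
    · have := hne' k 2 ?_
      · simpa using this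
      · rcases Nat.lt_or_ge k n with h | h
        · rw [Nat.mod_eq_of_lt h, Nat.mod_eq_of_lt (by omega)]; omega
        · have : k = n := by omega
          rw [this, Nat.mod_self, Nat.mod_eq_of_lt (by omega)]; omega
  have hstep : ∀ k : ℕ, 3 ≤ k → k ≤ n - 1 → g k * g (k + 1) < 0 := by
    intro k hk3 hkn
    have hc := hcross k hk3 hkn
    have hcast : ((k : ZMod n) + 1) = ((k + 1 : ℕ) : ZMod n) := by push_cast; ring
    rw [hcast] at hc
    exact opp_sides _ _ _ _ (hgnz k (by omega) hk3) (hgnz (k + 1) (by omega) (by omega)) hc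
  have main : ∀ m, 3 ≤ m → m ≤ n →
      ((Even m → g 3 * g m < 0) ∧ (¬ Even m → 0 < g 3 * g m)) := by
    intro m hm
    induction m, hm using Nat.le_induction with
    | base =>
      intro _
      refine ⟨fun h => absurd h (by decide), fun _ => ?_⟩
      exact mul_self_pos.mpr (hgnz 3 (by omega) le_rfl)
    | succ m hm ih =>
      intro hmn
      have ihm := ih (by omega)
      have hst := hstep m hm (by omega)
      constructor
      · intro he
        have hodd : ¬ Even m := by
          rw [Nat.even_add_one] at he; exact he
        have hp := ihm.2 hodd
        nlinarith [mul_pos hp (neg_pos.mpr hst), sq_nonneg (g m)]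
      · intro ho
        have heven : Even m := by
          rw [Nat.even_add_one] at ho; exact not_not.mp ho
        have hp := ihm.1 heven
        nlinarith [mul_pos (neg_pos.mpr hp) (neg_pos.mpr hst), sq_nonneg (g m)]
  have hfin : g 3 * g n < 0 := (main n (by omega) le_rfl).1 hev
  have hg3 : g 3 ≠ 0 := fun h => by simp [h] at hfin
  -- now the conclusion
  rintro ⟨x, hx1, hx2⟩
  have hone : ((n : ZMod n) + 1) = 1 := by simp [ZMod.natCast_self]
  rw [hone] at hx2
  obtain ⟨a, b, ha, hb, hab, rfl⟩ := hx1
  obtain ⟨c, d, hc, hd, hcd, heq⟩ := hx2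
  have e1 : det2 (v 1) (v 2) (a • v 2 + b • v 3) = b * g 3 := by
    rw [det2_combo _ _ _ _ a b hab, det2_self_right]
    have h3 : ((3 : ℕ) : ZMod n) = (3 : ZMod n) := by push_cast; ring
    rw [hg]; simp only [h3]; ring
  have e2 : det2 (v 1) (v 2) (c • v (n : ZMod n) + d • v 1) = c * g n := by
    rw [det2_combo _ _ _ _ c d hcd, det2_self_left]
    rw [hg]; ring
  rw [heq] at e2
  have heq2 : b * g 3 = c * g n := by rw [← e1, ← e2]
  have h3 : b * g 3 * g 3 = c * (g n * g 3) := by linear_combination (g 3) * heq2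
  have h4 : c * (g n * g 3) < 0 := mul_neg_of_pos_of_neg hc (by rw [mul_comm]; exact hfin)
  have h5 : 0 < b * (g 3 * g 3) := mul_pos hb (mul_self_pos.mpr hg3)
  nlinarith [h3, h4, h5]
end
end

section
/- If f is an injective geometric homomorphism between geometric realizations G-bar and G-hat of the same graph G, then for every vertex v of G-bar, the number of uncrossed edges incident to v in G-bar is at least the number of uncrossed edges incident to f(v) in G-hat. -/
noncomputable section

/-- A geometric realization of an abstract graph `G`: a straight-line drawing on
points in general position. -/
structure GeomRealization {V : Type*} (G : SimpleGraph V) where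
  pos : V → Pt
  genpos : GenPos pos

variable {V : Type*} {G : SimpleGraph V}

/-- Edges `e` and `f` of the realization `R` cross. -/
def GeomRealization.Crosses (R : GeomRealization G) (e f : Sym2 V) : Prop :=
  e ≠ f ∧ ∃ u v x y : V, e = s(u, v) ∧ f = s(x, y) ∧
    SegCross (R.pos u) (R.pos v) (R.pos x) (R.pos y)

/-- An injective geometric homomorphism between two geometric realizations of the
same abstract graph `G`: an injective vertex map preserving adjacency and
crossings. -/
structure GeomHom (R S : GeomRealization G) where
  toFun : V → V
  inj : Function.Injective toFun
  adj : ∀ u v : V, G.Adj u v → G.Adj (toFun u) (toFun v)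
  cross : ∀ u v x y : V, G.Adj u v → G.Adj x y →
    SegCross (R.pos u) (R.pos v) (R.pos x) (R.pos y) →
    SegCross (S.pos (toFun u)) (S.pos (toFun v)) (S.pos (toFun x)) (S.pos (toFun y))

/-- The total number of crossings of a realization: the number of unordered pairs of
edges of `G` that cross. -/
def GeomRealization.crNum (R : GeomRealization G) : ℕ :=
  Set.ncard {q : Sym2 (Sym2 V) | ∃ e f : Sym2 V, q = s(e, f) ∧
    e ∈ G.edgeSet ∧ f ∈ G.edgeSet ∧ R.Crosses e f}

/-- `cr(e)`: the number of edges of `G` crossing the edge `e` in `R`. -/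
def GeomRealization.crEdge (R : GeomRealization G) (e : Sym2 V) : ℕ :=
  Set.ncard {f : Sym2 V | f ∈ G.edgeSet ∧ R.Crosses e f}

/-- The edge `e` is uncrossed in `R`. -/
def GeomRealization.Uncrossed (R : GeomRealization G) (e : Sym2 V) : Prop :=
  ∀ f ∈ G.edgeSet, ¬ R.Crosses e f

/-- `d₀(v)`: the number of uncrossed edges incident to the vertex `v`. -/
def GeomRealization.d0 (R : GeomRealization G) (v : V) : ℕ :=
  Set.ncard {e : Sym2 V | e ∈ G.edgeSet ∧ v ∈ e ∧ R.Uncrossed e}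

/-! An injective self-map of the finite edge set of `G` is onto, so every edge at `f(v)` is the
image of an edge at `v`; as `f` preserves crossings, that edge is uncrossed whenever its image
is. Hence `Sym2.map f` maps the uncrossed edges at `v` in `R` injectively onto a superset of
the uncrossed edges at `f(v)` in `S`. -/

namespace GeomHom

variable {R S : GeomRealization G} (f : GeomHom R S)

theorem mapsTo_edgeSet : Set.MapsTo (Sym2.map f.toFun) G.edgeSet G.edgeSet := by
  intro e he
  induction e using Sym2.ind with
  | _ x y => exact f.adj x y he

theorem bijOn_edgeSet [Finite V] : Set.BijOn (Sym2.map f.toFun) G.edgeSet G.edgeSet :=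
  ((Set.toFinite G.edgeSet).injOn_iff_bijOn_of_mapsTo f.mapsTo_edgeSet).mp
    (Sym2.map.injective f.inj).injOn

theorem crosses_map {e g : Sym2 V} (he : e ∈ G.edgeSet) (hg : g ∈ G.edgeSet)
    (h : R.Crosses e g) : S.Crosses (e.map f.toFun) (g.map f.toFun) := by
  obtain ⟨hne, a, b, x, y, rfl, rfl, hseg⟩ := h
  exact ⟨(Sym2.map.injective f.inj).ne hne, f.toFun a, f.toFun b, f.toFun x, f.toFun y,
    rfl, rfl, f.cross a b x y he hg hseg⟩

theorem uncrossed_of_uncrossed_map {e : Sym2 V} (he : e ∈ G.edgeSet)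
    (h : S.Uncrossed (e.map f.toFun)) : R.Uncrossed e :=
  fun _ hg hcr => h _ (f.mapsTo_edgeSet hg) (f.crosses_map he hg hcr)

end GeomHom

/-- Under an injective geometric homomorphism `f : R → S`, each vertex `v` has at
least as many uncrossed incident edges in `R` as `f(v)` has in `S`. -/
theorem d0_ge_of_geomHom [Finite V] (R S : GeomRealization G) (f : GeomHom R S)
    (v : V) : S.d0 (f.toFun v) ≤ R.d0 v := by
  unfold GeomRealization.d0
  set A := {e : Sym2 V | e ∈ G.edgeSet ∧ v ∈ e ∧ R.Uncrossed e}
  have hsub : {e | e ∈ G.edgeSet ∧ f.toFun v ∈ e ∧ S.Uncrossed e} ⊆ Sym2.map f.toFun '' A := by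
    rintro _ ⟨he', hv', hunc⟩
    obtain ⟨e, he, rfl⟩ := f.bijOn_edgeSet.surjOn he'
    obtain ⟨u, hu, hfu⟩ := Sym2.mem_map.mp hv'
    exact ⟨e, ⟨he, f.inj hfu ▸ hu, f.uncrossed_of_uncrossed_map he hunc⟩, rfl⟩
  calc _ ≤ (Sym2.map f.toFun '' A).ncard := Set.ncard_le_ncard hsub (A.toFinite.image _)
    _ = A.ncard := Set.ncard_image_of_injective A (Sym2.map.injective f.inj)
end
end

section
/- Let n ≥ 3 and let v1,...,vn be points in general position in the plane such that all segments from v1 to the other points are crossed by no other segment v_i v_j (i,j ≠ 1). Then the points v2,...,v_n are in convex position. -/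
noncomputable section

/-!
If some `v x` (`x ≠ 0`) lay in the convex hull of the other points `v i`, `i ≠ 0`, then by
Carathéodory and general position it would lie strictly inside a triangle `v a, v b, v c`.
If `v 0` is outside that triangle, the segment from `v 0` to `v x` leaves it through a side.
If `v 0` is inside, it lies in one of the three triangles obtained by replacing a vertex `v i`
by `v x`, and `v i` lies outside that triangle, so the segment from `v 0` to `v i` leaves it
through a side. Either way a segment at `v 0` is crossed.

Crossings are found with barycentric coordinates: moving from a point whose coordinates are
all positive towards one with a negative coordinate, the first coordinate to vanish marks
a point on a side.
-/

open Set Function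

section Update

variable {α β : Type*} [DecidableEq α]

theorem Function.Injective.update_of_notMem_range {f : α → β} (hf : Injective f) (i : α)
    {x : β} (hx : x ∉ range f) : Injective (update f i x) := by
  intro a b hab
  by_cases ha : a = i <;> by_cases hb : b = i <;> simp_all [hf.eq_iff]

theorem Set.range_update_subset (f : α → β) (i : α) (x : β) :
    range (update f i x) ⊆ insert x (f '' {i}ᶜ) := by
  rintro _ ⟨j, rfl⟩
  rcases eq_or_ne j i with rfl | hj
  · simp
  · exact Or.inr ⟨j, hj, (update_of_ne hj x f).symm⟩

end Update

theorem exists_mem_Ioo_lineMap_nonneg_and_eq_zero {ι : Type*} [Fintype ι] {p q : ι → ℝ}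
    (hp : ∀ i, 0 < p i) (hq : ∃ i, q i < 0) :
    ∃ t ∈ Ioo (0 : ℝ) 1, (∀ j, 0 ≤ AffineMap.lineMap (p j) (q j) t) ∧
      ∃ i, AffineMap.lineMap (p i) (q i) t = 0 := by
  classical
  obtain ⟨i, hi, hmin⟩ := (Finset.univ.filter fun j => q j < 0).exists_min_image
    (fun j => p j / (p j - q j)) (by simpa [Finset.Nonempty] using hq)
  simp only [Finset.mem_filter, Finset.mem_univ, true_and] at hi hmin
  have hden : 0 < p i - q i := by linarith [hp i]
  have ht0 : 0 < p i / (p i - q i) := div_pos (hp i) hden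
  have ht1 : p i / (p i - q i) < 1 := (div_lt_one hden).2 (by linarith)
  refine ⟨p i / (p i - q i), ⟨ht0, ht1⟩, fun j => ?_, i, ?_⟩
  · rw [AffineMap.lineMap_apply_ring']
    rcases lt_or_ge (q j) 0 with hj | hj
    · have := (le_div_iff₀ (by linarith [hp j] : 0 < p j - q j)).1 (hmin j hj)
      linarith
    · nlinarith [hp j]
  · rw [AffineMap.lineMap_apply_ring']
    field_simp
    ring

namespace AffineBasis

variable {ι E : Type*} [AddCommGroup E] [Module ℝ E]

theorem exists_coord_neg_of_notMem_convexHull (b : AffineBasis ι ℝ E) {x : E}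
    (hx : x ∉ convexHull ℝ (range b)) : ∃ i, b.coord i x < 0 := by
  simpa [b.convexHull_eq_nonneg_coord] using hx

theorem coord_lt_one [Fintype ι] [Nontrivial ι] (b : AffineBasis ι ℝ E) {w : E}
    (hw : ∀ i, 0 < b.coord i w) (i : ι) : b.coord i w < 1 := by
  classical
  obtain ⟨j, hji⟩ := exists_ne i
  rw [← b.sum_coord_apply_eq_one w]
  calc b.coord i w < b.coord i w + b.coord j w := lt_add_of_pos_right _ (hw j)
    _ = ∑ l ∈ {i, j}, b.coord l w := by rw [Finset.sum_pair hji.symm]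
    _ ≤ ∑ l, b.coord l w :=
      Finset.sum_le_sum_of_subset_of_nonneg (Finset.subset_univ _) fun l _ _ => (hw l).le

section Update

variable [DecidableEq ι]

theorem apply_notMem_convexHull_update (b : AffineBasis ι ℝ E) {i : ι} {w : E}
    (hw₀ : 0 ≤ b.coord i w) (hw₁ : b.coord i w < 1) :
    b i ∉ convexHull ℝ (range (update (⇑b) i w)) := by
  have hsub :
      convexHull ℝ (range (update (⇑b) i w)) ⊆ b.coord i ⁻¹' Iic (b.coord i w) := by
    refine convexHull_min ?_ ((convex_Iic _).affine_preimage _)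
    rintro _ ⟨j, rfl⟩
    rcases eq_or_ne j i with rfl | hj
    · simp
    · simp [update_of_ne hj, b.coord_apply_ne hj.symm, hw₀]
  intro h
  have := hsub h
  simp [b.coord_apply_eq] at this
  linarith

/-- Replacing the vertex `b i` minimizing `b.coord i p / b.coord i w` by `w` gives a simplex
still containing `p`. -/
theorem exists_mem_convexHull_update [Fintype ι] [Nonempty ι] (b : AffineBasis ι ℝ E) {w p : E}
    (hw : ∀ i, 0 < b.coord i w) (hp : ∀ i, 0 ≤ b.coord i p) :
    ∃ i, p ∈ convexHull ℝ (range (update (⇑b) i w)) := by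
  obtain ⟨i, -, hmin⟩ := Finset.univ.exists_min_image
    (fun j => b.coord j p / b.coord j w) Finset.univ_nonempty
  set t := b.coord i p / b.coord i w
  set d : ι → ℝ := fun j => b.coord j p - t * b.coord j w
  have hti : t * b.coord i w = b.coord i p := div_mul_cancel₀ _ (hw i).ne'
  have hdi : d i = 0 := by simp [d, hti]
  have hweight : ∀ j, update d i t j = d j + (Pi.single i t : ι → ℝ) j := by
    intro j
    rcases eq_or_ne j i with rfl | hj
    · simp [hdi]
    · simp [hj]
  have hterm : ∀ j, update d i t j • update (⇑b) i w j =
      d j • b j + (Pi.single i (t • w) : ι → E) j := by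
    intro j
    rcases eq_or_ne j i with rfl | hj
    · simp [hdi]
    · simp [hj]
  have hdsum : ∑ j, d j = 1 - t := by
    simp [d, Finset.sum_sub_distrib, ← Finset.mul_sum, b.sum_coord_apply_eq_one]
  have hdcomb : ∑ j, d j • b j = p - t • w := by
    simp only [d, sub_smul, mul_smul, Finset.sum_sub_distrib, ← Finset.smul_sum,
      b.linear_combination_coord_eq_self]
  refine ⟨i, ?_⟩
  convert (convex_convexHull ℝ (range (update (⇑b) i w))).sum_mem (t := Finset.univ)
    (w := update d i t) (fun j _ => ?_) ?_ fun j _ => subset_convexHull ℝ _ (mem_range_self j)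
  · simp [hterm, Finset.sum_add_distrib, hdcomb]
  · rcases eq_or_ne j i with rfl | hj
    · simpa using div_nonneg (hp j) (hw j).le
    · simp only [update_of_ne hj, d, sub_nonneg]
      exact (le_div_iff₀ (hw j)).1 (hmin j (Finset.mem_univ j))
  · simp [hweight, Finset.sum_add_distrib, hdsum]

end Update

theorem exists_mem_segment_of_coord_eq_zero (b : AffineBasis (Fin 3) ℝ E) {y : E}
    (hy : ∀ j, 0 ≤ b.coord j y) {i : Fin 3} (hi : b.coord i y = 0) :
    ∃ j k, j ≠ k ∧ y ∈ segment ℝ (b j) (b k) := by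
  have hsum := b.sum_coord_apply_eq_one y
  have hcomb := b.linear_combination_coord_eq_self y
  rw [Fin.sum_univ_three] at hsum hcomb
  fin_cases i <;> simp only [Fin.zero_eta, Fin.mk_one, Fin.reduceFinMk] at hi
  · exact ⟨1, 2, by decide, _, _, hy 1, hy 2, by linarith, by simpa [hi] using hcomb⟩
  · exact ⟨0, 2, by decide, _, _, hy 0, hy 2, by linarith, by simpa [hi] using hcomb⟩
  · exact ⟨0, 1, by decide, _, _, hy 0, hy 1, by linarith, by simpa [hi] using hcomb⟩

theorem exists_openSegment_inter_segment (b : AffineBasis (Fin 3) ℝ E) {p q : E}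
    (hp : ∀ i, 0 < b.coord i p) (hq : ∃ i, b.coord i q < 0) :
    ∃ j k, j ≠ k ∧ (openSegment ℝ p q ∩ segment ℝ (b j) (b k)).Nonempty := by
  obtain ⟨t, ht, hnonneg, i, hi⟩ := exists_mem_Ioo_lineMap_nonneg_and_eq_zero hp hq
  simp only [← AffineMap.apply_lineMap] at hnonneg hi
  obtain ⟨j, k, hjk, hy⟩ := b.exists_mem_segment_of_coord_eq_zero hnonneg hi
  rw [openSegment_eq_image_lineMap]
  exact ⟨j, k, hjk, _, mem_image_of_mem _ ht, hy⟩

end AffineBasis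
namespace GenPos

variable {V : Type*} {v : V → Pt}

theorem notMem_segment (h : GenPos v) {a b x : V} (hxa : x ≠ a) (hxb : x ≠ b) :
    v x ∉ segment ℝ (v a) (v b) := by
  intro hx
  rcases eq_or_ne a b with rfl | hab
  · rw [segment_same, mem_singleton_iff] at hx
    exact hxa (h.1 hx)
  · exact h.2 a x b hxa.symm hxb hab (mem_segment_iff_wbtw.1 hx).collinear

theorem affineIndependent_comp (h : GenPos v) {idx : Fin 3 → V} (hidx : Injective idx) :
    AffineIndependent ℝ (v ∘ idx) :=
  (affineIndependent_iff_not_collinear_of_ne (i₁ := 0) (i₂ := 1) (i₃ := 2) (by decide)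
    (by decide) (by decide)).2
    (h.2 _ _ _ (hidx.ne (by decide)) (hidx.ne (by decide)) (hidx.ne (by decide)))

def triangle (h : GenPos v) {idx : Fin 3 → V} (hidx : Injective idx) :
    AffineBasis (Fin 3) ℝ Pt :=
  ⟨v ∘ idx, h.affineIndependent_comp hidx, by
    rw [(h.affineIndependent_comp hidx).affineSpan_eq_top_iff_card_eq_finrank_add_one]; simp⟩

@[simp]
theorem coe_triangle (h : GenPos v) {idx : Fin 3 → V} (hidx : Injective idx) :
    ⇑(h.triangle hidx) = v ∘ idx :=
  rfl

theorem coord_triangle_pos (h : GenPos v) {idx : Fin 3 → V} (hidx : Injective idx) {y : V}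
    (hy : y ∉ range idx) (hyT : v y ∈ convexHull ℝ (range (v ∘ idx))) (i : Fin 3) :
    0 < (h.triangle hidx).coord i (v y) := by
  have hnonneg : ∀ j, 0 ≤ (h.triangle hidx).coord j (v y) := by
    rwa [← h.coe_triangle hidx, AffineBasis.convexHull_eq_nonneg_coord] at hyT
  refine (hnonneg i).lt_of_ne fun hi => ?_
  obtain ⟨j, k, -, hseg⟩ :=
    (h.triangle hidx).exists_mem_segment_of_coord_eq_zero hnonneg hi.symm
  exact h.notMem_segment (fun e => hy ⟨j, e.symm⟩) (fun e => hy ⟨k, e.symm⟩) hseg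

theorem exists_segCross_triangle (h : GenPos v) {idx : Fin 3 → V} (hidx : Injective idx)
    {p q : V} (hp : p ∉ range idx) (hq : q ∉ range idx)
    (hpT : ∀ i, 0 < (h.triangle hidx).coord i (v p))
    (hqT : ∃ i, (h.triangle hidx).coord i (v q) < 0) :
    ∃ j k, j ≠ k ∧ SegCross (v p) (v q) (v (idx j)) (v (idx k)) := by
  obtain ⟨j, k, hjk, y, hy, hyseg⟩ :=
    (h.triangle hidx).exists_openSegment_inter_segment hpT hqT
  have hvertex : ∀ l, v (idx l) ≠ y := fun l e =>
    h.notMem_segment (fun e' => hp ⟨l, e'⟩) (fun e' => hq ⟨l, e'⟩)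
      (e ▸ openSegment_subset_segment ℝ _ _ hy)
  exact ⟨j, k, hjk, y, hy, mem_openSegment_of_ne_left_right (hvertex j) (hvertex k) hyseg⟩

theorem exists_triangle_of_mem_convexHull (h : GenPos v) {s : Set V} {x : V} (hx : x ∉ s)
    (hxs : v x ∈ convexHull ℝ (v '' s)) :
    ∃ idx : Fin 3 → V,
      Injective idx ∧ range idx ⊆ s ∧ v x ∈ convexHull ℝ (range (v ∘ idx)) := by
  classical
  rw [convexHull_eq_union] at hxs
  simp only [mem_iUnion] at hxs
  obtain ⟨t, hts, hti, hxt⟩ := hxs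
  obtain ⟨u, hus, rfl⟩ := Finset.subset_set_image_iff.1 hts
  have hcard : u.card ≤ 3 := by
    have := hti.card_le_finrank_succ.trans (Nat.succ_le_succ (Submodule.finrank_le _))
    simpa [Finset.card_image_of_injective _ h.1] using this
  interval_cases hu : u.card
  · simp_all
  · obtain ⟨a, rfl⟩ := Finset.card_eq_one.1 hu
    simp only [Finset.image_singleton, Finset.coe_singleton, convexHull_singleton,
      mem_singleton_iff] at hxt
    exact (hx (h.1 hxt ▸ hus (Finset.mem_singleton_self a))).elim
  · obtain ⟨a, b, -, rfl⟩ := Finset.card_eq_two.1 hu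
    simp only [Finset.coe_image, Finset.coe_pair, image_pair, convexHull_pair] at hxt
    exact (h.notMem_segment (a := a) (b := b) (x := x) (fun e => hx (e ▸ hus (by simp)))
      (fun e => hx (e ▸ hus (by simp))) hxt).elim
  · let e := u.equivFinOfCardEq hu
    have hrange : range (fun i => (e.symm i : V)) = u :=
      (e.symm.surjective.range_comp _).trans Subtype.range_coe
    refine ⟨fun i => e.symm i, Subtype.val_injective.comp e.symm.injective, hrange ▸ hus, ?_⟩
    rwa [range_comp, hrange, ← Finset.coe_image]

end GenPos

def StarUncrossed {V : Type*} (v : V → Pt) (o : V) : Prop :=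
  ∀ j i k, j ≠ o → i ≠ o → k ≠ o → i ≠ k → ¬ SegCross (v o) (v j) (v i) (v k)

theorem StarUncrossed.notMem_convexHull {V : Type*} {v : V → Pt} {o x : V}
    (hunc : StarUncrossed v o) (h : GenPos v) {idx : Fin 3 → V} (hidx : Injective idx)
    (ho : o ∉ range idx) (hxo : x ≠ o) (hx : x ∉ range idx) :
    v x ∉ convexHull ℝ (range (v ∘ idx)) := by
  classical
  intro hxT
  set T := h.triangle hidx
  have hxpos := h.coord_triangle_pos hidx hx hxT
  by_cases hoT : v o ∈ convexHull ℝ (range (v ∘ idx))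
  · obtain ⟨i, hoT'⟩ := T.exists_mem_convexHull_update hxpos
      fun j => (h.coord_triangle_pos hidx ho hoT j).le
    have hiT' := T.apply_notMem_convexHull_update (hxpos i).le (T.coord_lt_one hxpos i)
    set idx' := update idx i x
    have hidx' : Injective idx' := hidx.update_of_notMem_range i hx
    have hT' : ⇑(h.triangle hidx') = update (⇑T) i (v x) := comp_update v idx i x
    have ho' : o ∉ range idx' := fun hmem => by
      rcases range_update_subset idx i x hmem with rfl | ⟨j, -, hj⟩
      exacts [hxo rfl, ho ⟨j, hj⟩]
    have hi' : idx i ∉ range idx' := fun hmem => by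
      rcases range_update_subset idx i x hmem with hix | ⟨j, hj, hji⟩
      exacts [hx ⟨i, hix⟩, hj (hidx hji)]
    rw [← hT'] at hoT' hiT'
    obtain ⟨j, k, hjk, hcross⟩ := h.exists_segCross_triangle hidx' ho' hi'
      (h.coord_triangle_pos hidx' ho' (by rwa [← h.coe_triangle hidx']))
      ((h.triangle hidx').exists_coord_neg_of_notMem_convexHull hiT')
    exact hunc (idx i) (idx' j) (idx' k) (fun e => ho ⟨i, e⟩) (fun e => ho' ⟨j, e⟩)
      (fun e => ho' ⟨k, e⟩) (hidx'.ne hjk) hcross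
  · obtain ⟨j, k, hjk, hcross⟩ := h.exists_segCross_triangle hidx hx ho hxpos
      (T.exists_coord_neg_of_notMem_convexHull hoT)
    exact hunc x (idx j) (idx k) hxo (fun e => ho ⟨j, e⟩) (fun e => ho ⟨k, e⟩) (hidx.ne hjk)
      (by rwa [SegCross, openSegment_symm])

/-- If in a complete geometric graph on `v 0, …, v (n-1)` (`n ≥ 3`, general position)
no segment from `v 0` is crossed by any segment `v i v j` with `i, j ≠ 0`, then the
points `v i`, `i ≠ 0`, are in convex position. -/
theorem uncrossed_star_convex_position (n : ℕ) (hn : 3 ≤ n) (v : Fin n → Pt)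
    (hgen : GenPos v)
    (huncrossed : ∀ j i k : Fin n, j ≠ ⟨0, by omega⟩ → i ≠ ⟨0, by omega⟩ →
      k ≠ ⟨0, by omega⟩ → i ≠ k →
      ¬ SegCross (v ⟨0, by omega⟩) (v j) (v i) (v k)) :
    ConvexIndependent ℝ (fun x : {i : Fin n // i ≠ ⟨0, by omega⟩} => v x.1) := by
  rw [convexIndependent_iff_notMem_convexHull_sdiff]
  rintro x s hxs
  rw [← image_image] at hxs
  have hx : x.1 ∉ Subtype.val '' (s \ {x}) := fun ⟨y, hy, hyx⟩ => hy.2 (Subtype.ext hyx)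
  obtain ⟨idx, hidx, hidxs, hxT⟩ := hgen.exists_triangle_of_mem_convexHull hx hxs
  refine StarUncrossed.notMem_convexHull huncrossed hgen hidx ?_ x.2
    (fun hmem => hx (hidxs hmem)) hxT
  rintro ⟨i, hi⟩
  obtain ⟨y, -, hy⟩ := hidxs ⟨i, rfl⟩
  exact y.2 (hy.trans hi)
end
end
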